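/- arXiv:1603.03788 — 4 statements merged into one kernel-verified Lean document; each statement's English description precedes it below -/
import Mathlib

section
/- Let ψ : [a,b] → [a,b] be a continuously differentiable, non-decreasing surjection with ψ(a) = a and ψ(b) = b, and let X : [a,b] → ℝ^d be a continuously differentiable path. Denote by X̃ the reparametrized path X̃_t = X_{ψ(t)}. Then for every k ≥ 1 and every word (i₁,…,i_k) with letters in {1,…,d}, the iterated integrals coincide: S(X̃)^{i₁,…,i_k}_{a,b} = S(X)^{i₁,…,i_k}_{a,b}. -/
open MeasureTheory

/-- The `k`-fold iterated integral (signature coefficient) of a path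
`X : ℝ → (Fin d → ℝ)` over `[a,b]` along the word `w`, defined as the Lebesgue
integral of `∏ i, (X^{w i})'(t i)` over the simplex `a < t₁ < ⋯ < t_k < b`.
For the empty word (`k = 0`) this equals `1` by convention. -/
noncomputable def sigTerm {d : ℕ} (X : ℝ → Fin d → ℝ) (a b : ℝ) {k : ℕ}
    (w : Fin k → Fin d) : ℝ :=
  ∫ t in {t : Fin k → ℝ | StrictMono t ∧ ∀ i, t i ∈ Set.Ioo a b},
    ∏ i, deriv (fun s => X s (w i)) (t i)

/-!
Substitute `u = ψ ∘ t` coordinatewise. By the chain rule the integrand of `S(X ∘ ψ)` at `t` is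
the Jacobian `∏ ψ'(tᵢ)` times the integrand of `S(X)` at `ψ ∘ t`. On the points of the simplex
where no `ψ'(tᵢ)` vanishes, the map `t ↦ ψ ∘ t` is injective and lands in the simplex, because a
monotone function cannot be constant on an interval ending at a point of nonzero derivative.
Its image there misses only points with a coordinate in `ψ({ψ' = 0})`, a null set by Sard's lemma
in dimension one, so the change of variables formula gives the equality.
-/

open Set

theorem MonotoneOn.apply_lt_apply_of_deriv_ne_zero {f : ℝ → ℝ} {s : Set ℝ} [s.OrdConnected]
    {x y : ℝ} (hf : MonotoneOn f s) (hx : x ∈ s) (hy : y ∈ s) (hxy : x < y)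
    (hd : deriv f x ≠ 0 ∨ deriv f y ≠ 0) : f x < f y := by
  by_contra! hle
  have hxys : Icc x y ⊆ s := Set.Icc_subset s hx hy
  have hconst : EqOn f (fun _ => f x) (Icc x y) := fun z hz =>
    le_antisymm ((hf (hxys hz) hy hz.2).trans hle) (hf hx (hxys hz) hz.1)
  obtain ⟨z, hz, hdz⟩ : ∃ z ∈ Icc x y, deriv f z ≠ 0 := by
    rcases hd with hd | hd
    exacts [⟨x, left_mem_Icc.2 hxy.le, hd⟩, ⟨y, right_mem_Icc.2 hxy.le, hd⟩]
  have h0 : HasDerivWithinAt f 0 (Icc x y) z :=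
    (hasDerivWithinAt_const z _ (f x)).congr hconst (hconst hz)
  exact hdz ((uniqueDiffOn_Icc hxy z hz).eq_deriv _
    (differentiableAt_of_deriv_ne_zero hdz).hasDerivAt.hasDerivWithinAt h0)

theorem MonotoneOn.deriv_nonneg_of_mem_nhds {f : ℝ → ℝ} {s : Set ℝ} {x : ℝ}
    (hf : MonotoneOn f s) (hs : s ∈ nhds x) : 0 ≤ deriv f x :=
  derivWithin_of_mem_nhds (f := f) hs ▸ hf.derivWithin_nonneg

theorem MonotoneOn.injOn_pi_comp {ι : Type*} {f : ℝ → ℝ} {s : Set ℝ} [s.OrdConnected]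
    (hf : MonotoneOn f s) :
    InjOn (fun t i => f (t i)) {t : ι → ℝ | ∀ i, t i ∈ s ∧ deriv f (t i) ≠ 0} := by
  intro t ht u hu htu
  funext i
  by_contra hne
  rcases lt_or_gt_of_ne hne with h | h
  · exact (hf.apply_lt_apply_of_deriv_ne_zero (ht i).1 (hu i).1 h (.inl (ht i).2)).ne
      (congrFun htu i)
  · exact (hf.apply_lt_apply_of_deriv_ne_zero (hu i).1 (ht i).1 h (.inl (hu i).2)).ne
      (congrFun htu i).symm

theorem measurableSet_forall_deriv_ne_zero {ι : Type*} [Countable ι] (f : ℝ → ℝ) :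
    MeasurableSet {t : ι → ℝ | ∀ i, deriv f (t i) ≠ 0} := by
  simp only [ofPred_forall]
  exact .iInter fun i =>
    (measurableSet_singleton 0).compl.preimage ((measurable_deriv f).comp (measurable_pi_apply i))

theorem Real.volume_image_setOf_deriv_eq_zero {f : ℝ → ℝ} (hf : Differentiable ℝ f) :
    volume (f '' {x | deriv f x = 0}) = 0 :=
  addHaar_image_eq_zero_of_det_fderivWithin_eq_zero volume
    (fun x _ => (hf x).hasFDerivAt.hasFDerivWithinAt) fun x hx => by
      simpa [← toSpanSingleton_deriv] using hx

theorem hasFDerivAt_pi_comp {ι : Type*} [Fintype ι] {f f' : ℝ → ℝ} {x : ι → ℝ}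
    (hf : ∀ i, HasDerivAt f (f' (x i)) (x i)) :
    HasFDerivAt (fun t i => f (t i))
      (ContinuousLinearMap.pi fun i =>
        (ContinuousLinearMap.toSpanSingleton ℝ (f' (x i))).comp (ContinuousLinearMap.proj i)) x :=
  hasFDerivAt_pi.2 fun i => (hf i).hasFDerivAt.comp x (hasFDerivAt_apply i x)

theorem setIntegral_image_pi_comp {ι E : Type*} [Fintype ι] [NormedAddCommGroup E]
    [NormedSpace ℝ E] {f f' : ℝ → ℝ} (hf : ∀ x, HasDerivAt f (f' x) x) {s : Set (ι → ℝ)}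
    (hs : MeasurableSet s) (hinj : InjOn (fun t i => f (t i)) s) (g : (ι → ℝ) → E) :
    ∫ u in (fun t i => f (t i)) '' s, g u = ∫ t in s, (∏ i, |f' (t i)|) • g fun i => f (t i) := by
  rw [integral_image_eq_integral_abs_det_fderiv_smul volume hs
    (fun x _ => (hasFDerivAt_pi_comp fun i => hf (x i)).hasFDerivWithinAt) hinj]
  simp [ContinuousLinearMap.det_pi, Finset.abs_prod]

def orderedSimplex (a b : ℝ) (k : ℕ) : Set (Fin k → ℝ) :=
  {t | StrictMono t ∧ ∀ i, t i ∈ Ioo a b}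

theorem measurableSet_orderedSimplex (a b : ℝ) (k : ℕ) :
    MeasurableSet (orderedSimplex a b k) := by
  simp only [orderedSimplex, StrictMono, ofPred_and, ofPred_forall]
  refine .inter (.iInter fun i => .iInter fun j => ?_) (.iInter fun i =>
    measurableSet_Ioo.preimage (measurable_pi_apply i))
  by_cases hij : i < j
  · simpa [hij] using measurableSet_lt (measurable_pi_apply i) (measurable_pi_apply j)
  · simp [hij]

theorem sigTerm_comp {d k : ℕ} {ψ : ℝ → ℝ} {X : ℝ → Fin d → ℝ} (hψ : Differentiable ℝ ψ)
    (hX : Differentiable ℝ X) (a b : ℝ) (w : Fin k → Fin d) :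
    sigTerm (fun t => X (ψ t)) a b w = ∫ t in orderedSimplex a b k,
      (∏ i, deriv ψ (t i)) • ∏ i, deriv (fun s => X s (w i)) (ψ (t i)) := by
  have hchain : ∀ i u, deriv (fun s => X (ψ s) (w i)) u =
      deriv ψ u * deriv (fun s => X s (w i)) (ψ u) := fun i u => by
    rw [mul_comm]
    exact deriv_comp (h₂ := fun s => X s (w i)) u (differentiableAt_pi.1 (hX _) _) (hψ u)
  simp only [sigTerm, hchain, Finset.prod_mul_distrib, smul_eq_mul]
  rfl

section Reparametrisation

variable {a b : ℝ} {ψ : ℝ → ℝ} {k : ℕ}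

theorem mapsTo_orderedSimplex (hmono : MonotoneOn ψ (Icc a b)) (hψa : ψ a = a) (hψb : ψ b = b) :
    MapsTo (fun t i => ψ (t i)) (orderedSimplex a b k ∩ {t | ∀ i, deriv ψ (t i) ≠ 0})
      (orderedSimplex a b k) := by
  rintro t ⟨⟨hmt, hab⟩, hd⟩
  have hIcc : ∀ i, t i ∈ Icc a b := fun i => Ioo_subset_Icc_self (hab i)
  refine ⟨fun i j hij => hmono.apply_lt_apply_of_deriv_ne_zero (hIcc i) (hIcc j) (hmt hij)
    (.inl (hd i)), fun i => ⟨?_, ?_⟩⟩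
  · have ha : a ∈ Icc a b := left_mem_Icc.2 ((hIcc i).1.trans (hIcc i).2)
    simpa [hψa] using hmono.apply_lt_apply_of_deriv_ne_zero ha (hIcc i) (hab i).1 (.inr (hd i))
  · have hb : b ∈ Icc a b := right_mem_Icc.2 ((hIcc i).1.trans (hIcc i).2)
    simpa [hψb] using hmono.apply_lt_apply_of_deriv_ne_zero (hIcc i) hb (hab i).2 (.inl (hd i))

theorem orderedSimplex_diff_image_subset (hmono : MonotoneOn ψ (Icc a b))
    (hsurj : SurjOn ψ (Icc a b) (Icc a b)) (hψa : ψ a = a) (hψb : ψ b = b) :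
    orderedSimplex a b k \
        (fun t i => ψ (t i)) '' (orderedSimplex a b k ∩ {t | ∀ i, deriv ψ (t i) ≠ 0}) ⊆
      ⋃ i, (fun u => u i) ⁻¹' (ψ '' {x | deriv ψ x = 0}) := by
  rintro u ⟨⟨hmu, hu⟩, hnot⟩
  by_contra hcrit
  simp only [mem_iUnion, mem_preimage, not_exists] at hcrit
  choose t ht hψt using fun i => hsurj (Ioo_subset_Icc_self (hu i))
  refine hnot ⟨t, ⟨⟨fun i j hij => ?_, fun i => ⟨?_, ?_⟩⟩, fun i h => hcrit i ⟨t i, h, hψt i⟩⟩,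
    funext hψt⟩
  · by_contra! hji
    have := hmono (ht j) (ht i) hji
    rw [hψt, hψt] at this
    exact (hmu hij).not_ge this
  · refine (ht i).1.lt_of_ne fun h => (hu i).1.ne ?_
    rw [← hψt i, ← h, hψa]
  · refine (ht i).2.lt_of_ne fun h => (hu i).2.ne ?_
    rw [← hψt i, h, hψb]

theorem image_ae_eq_orderedSimplex (hψ : Differentiable ℝ ψ) (hmono : MonotoneOn ψ (Icc a b))
    (hsurj : SurjOn ψ (Icc a b) (Icc a b)) (hψa : ψ a = a) (hψb : ψ b = b) :
    (fun t i => ψ (t i)) '' (orderedSimplex a b k ∩ {t | ∀ i, deriv ψ (t i) ≠ 0})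
      =ᵐ[volume] orderedSimplex a b k := by
  refine ae_eq_set.2 ⟨?_, measure_mono_null (orderedSimplex_diff_image_subset hmono hsurj hψa hψb)
    (measure_iUnion_null fun i => Measure.pi_eval_preimage_null _
      (Real.volume_image_setOf_deriv_eq_zero hψ))⟩
  rw [sdiff_eq_empty.2 (mapsTo_orderedSimplex hmono hψa hψb).image_subset, measure_empty]

end Reparametrisation

theorem sigTerm_reparametrisation_general {d : ℕ} (a b : ℝ)
    (ψ : ℝ → ℝ) (hψ : ContDiff ℝ 1 ψ) (hmono : MonotoneOn ψ (Set.Icc a b))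
    (hsurj : Set.SurjOn ψ (Set.Icc a b) (Set.Icc a b))
    (hψa : ψ a = a) (hψb : ψ b = b)
    (X : ℝ → Fin d → ℝ) (hX : ContDiff ℝ 1 X)
    (k : ℕ) (w : Fin k → Fin d) :
    sigTerm (fun t => X (ψ t)) a b w = sigTerm X a b w := by
  have hψd : Differentiable ℝ ψ := hψ.differentiable one_ne_zero
  set g : (Fin k → ℝ) → ℝ := fun u => ∏ i, deriv (fun s => X s (w i)) (u i)
  set S := orderedSimplex a b k
  set T := S ∩ {t | ∀ i, deriv ψ (t i) ≠ 0}
  have hS : MeasurableSet S := measurableSet_orderedSimplex a b k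
  have hinj : InjOn (fun t i => ψ (t i)) T := by
    refine hmono.injOn_pi_comp.mono ?_
    exact fun t ht i => ⟨Ioo_subset_Icc_self (ht.1.2 i), ht.2 i⟩
  calc sigTerm (fun t => X (ψ t)) a b w
      = ∫ t in S, (∏ i, |deriv ψ (t i)|) • g fun i => ψ (t i) := by
        rw [sigTerm_comp hψd (hX.differentiable one_ne_zero)]
        refine setIntegral_congr_fun hS fun t ht => ?_
        congr 1
        refine Finset.prod_congr rfl fun i _ => (abs_of_nonneg ?_).symm
        exact hmono.deriv_nonneg_of_mem_nhds (Icc_mem_nhds (ht.2 i).1 (ht.2 i).2)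
    _ = ∫ t in T, (∏ i, |deriv ψ (t i)|) • g fun i => ψ (t i) := by
        refine setIntegral_eq_of_subset_of_forall_sdiff_eq_zero hS inter_subset_left ?_
        rintro t ⟨htS, htT⟩
        obtain ⟨i, hi⟩ : ∃ i, deriv ψ (t i) = 0 := by simpa [T, htS] using htT
        rw [Finset.prod_eq_zero (Finset.mem_univ i) (by simp [hi]), zero_smul]
    _ = ∫ u in (fun t i => ψ (t i)) '' T, g u :=
        (setIntegral_image_pi_comp (fun x => (hψd x).hasDerivAt)
          (hS.inter (measurableSet_forall_deriv_ne_zero ψ)) hinj g).symm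
    _ = sigTerm X a b w :=
        setIntegral_congr_set (image_ae_eq_orderedSimplex hψd hmono hsurj hψa hψb)

/-- Invariance of the signature under time reparametrisation: if `ψ` is a C¹
non-decreasing surjection of `[a,b]` onto itself fixing the endpoints, then all
iterated integrals of the reparametrised path `t ↦ X (ψ t)` coincide with those
of `X`. -/
theorem sigTerm_reparametrisation {d : ℕ} (a b : ℝ) (hab : a ≤ b)
    (ψ : ℝ → ℝ) (hψ : ContDiff ℝ 1 ψ) (hmono : MonotoneOn ψ (Set.Icc a b))
    (hsurj : Set.SurjOn ψ (Set.Icc a b) (Set.Icc a b))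
    (hψa : ψ a = a) (hψb : ψ b = b)
    (X : ℝ → Fin d → ℝ) (hX : ContDiff ℝ 1 X)
    (k : ℕ) (hk : 1 ≤ k) (w : Fin k → Fin d) :
    sigTerm (fun t => X (ψ t)) a b w = sigTerm X a b w :=
  sigTerm_reparametrisation_general a b ψ hψ hmono hsurj hψa hψb X hX k w
end

section
/- (Shuffle product identity, Ree) Let X : [a,b] → ℝ^d be a continuously differentiable path and let I = (i₁,…,i_k) and J = (j₁,…,j_m) be words with letters in {1,…,d}. Write (r₁,…,r_{k+m}) = (i₁,…,i_k,j₁,…,j_m) for their concatenation. Call a permutation σ of {1,…,k+m} a (k,m)-shuffle if σ⁻¹(1) < ⋯ < σ⁻¹(k) and σ⁻¹(k+1) < ⋯ < σ⁻¹(k+m). Then S(X)^I_{a,b} · S(X)^J_{a,b} = Σ_{σ ∈ Shuffles(k,m)} S(X)^{(r_{σ(1)},…,r_{σ(k+m)})}_{a,b}, where the sum runs over all (k,m)-shuffles σ. -/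
/-!
Through `(Fin k → ℝ) × (Fin m → ℝ) ≃ (Fin (k + m) → ℝ)`, Fubini turns the product of the two
iterated integrals into one integral over the tuples `u` whose first `k` and last `m` coordinates
are each increasing. Off the null set where two coordinates coincide, such a `u` is sorted by
exactly one permutation `σ`, and `σ` is then a `(k,m)`-shuffle; so the domain splits into the
disjoint pieces `{u | u ∘ σ increasing}`, `σ` a shuffle, and permuting coordinates identifies the
integral over each piece with the iterated integral along the shuffled word.
-/

open MeasureTheory

/-- A permutation `σ` of `{1,…,k+m}` is a `(k,m)`-shuffle if
`σ⁻¹(1) < ⋯ < σ⁻¹(k)` and `σ⁻¹(k+1) < ⋯ < σ⁻¹(k+m)`. -/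
def IsShuffle (k m : ℕ) (σ : Equiv.Perm (Fin (k + m))) : Prop :=
  StrictMono (fun i : Fin k => σ⁻¹ (Fin.castAdd m i)) ∧
  StrictMono (fun j : Fin m => σ⁻¹ (Fin.natAdd k j))

open Set Function

section Measure

theorem measurableSet_setOf_strictMono {ι : Type*} [Preorder ι] [Countable ι] :
    MeasurableSet {t : ι → ℝ | StrictMono t} := by
  simp only [StrictMono, ofPred_forall]
  exact .iInter fun i => .iInter fun j => .iInter fun _ =>
    measurableSet_lt (measurable_pi_apply i) (measurable_pi_apply j)

theorem ae_injective {ι : Type*} [Fintype ι] (μ : Measure (ι → ℝ)) [μ.IsAddHaarMeasure] :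
    ∀ᵐ u ∂μ, Injective u := by
  classical
  have hdiag : ∀ i j : ι, i ≠ j → μ {u | u i = u j} = 0 := by
    intro i j hij
    let L : (ι → ℝ) →ₗ[ℝ] ℝ := LinearMap.proj (R := ℝ) (φ := fun _ : ι => ℝ) i - LinearMap.proj j
    have hL : L ≠ 0 := fun h => by
      simpa [L, Pi.single_apply, hij.symm] using LinearMap.congr_fun h (Pi.single i 1)
    have hker : {u : ι → ℝ | u i = u j} = LinearMap.ker L := by
      ext u
      simp [L, sub_eq_zero]
    rw [hker]
    exact Measure.addHaar_submodule μ _ (mt LinearMap.ker_eq_top.mp hL)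
  have hcover : {u : ι → ℝ | ¬Injective u} ⊆
      ⋃ p : {p : ι × ι // p.1 ≠ p.2}, {u | u p.1.1 = u p.1.2} := by
    intro u hu
    simp only [Injective, not_forall, mem_ofPred_eq] at hu
    obtain ⟨i, j, hij, hne⟩ := hu
    exact mem_iUnion.2 ⟨⟨(i, j), hne⟩, hij⟩
  exact measure_mono_null hcover (measure_iUnion_null fun p => hdiag _ _ p.2)

theorem setIntegral_comp_perm {ι E : Type*} [Fintype ι] [NormedAddCommGroup E] [NormedSpace ℝ E]
    (σ : Equiv.Perm ι) (A : Set (ι → ℝ)) (G : (ι → ℝ) → E) :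
    ∫ u in (· ∘ σ) ⁻¹' A, G (u ∘ σ) = ∫ t in A, G t := by
  let e := (MeasurableEquiv.piCongrLeft (fun _ : ι => ℝ) σ).symm
  have he : ⇑e = (· ∘ σ) := by
    ext u i
    exact Equiv.piCongrLeft_symm_apply _ _ _ _
  have hmp : MeasurePreserving e := (volume_measurePreserving_piCongrLeft _ σ).symm _
  rw [← he]
  exact hmp.setIntegral_preimage_emb e.measurableEmbedding G A

variable (α : Type*) [MeasurableSpace α] (k m : ℕ)

def finAddSplit : (Fin (k + m) → α) ≃ᵐ (Fin k → α) × (Fin m → α) :=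
  (MeasurableEquiv.piCongrLeft (fun _ => α) finSumFinEquiv).symm.trans
    (MeasurableEquiv.sumPiEquivProdPi fun _ => α)

variable {α k m}

@[simp]
theorem finAddSplit_apply (u : Fin (k + m) → α) :
    finAddSplit α k m u = (fun i => u (Fin.castAdd m i), fun j => u (Fin.natAdd k j)) := by
  ext i <;> simp [finAddSplit, MeasurableEquiv.piCongrLeft, MeasurableEquiv.coe_sumPiEquivProdPi,
    Equiv.sumPiEquivProdPi, Equiv.piCongrLeft_symm_apply]

theorem measurePreserving_finAddSplit {β : Type*} [MeasureSpace β]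
    [SigmaFinite (volume : Measure β)] : MeasurePreserving (finAddSplit β k m) :=
  (volume_measurePreserving_sumPiEquivProdPi _).comp
    ((volume_measurePreserving_piCongrLeft _ finSumFinEquiv).symm _)

theorem setIntegral_mul_setIntegral_eq_setIntegral_finAddSplit {𝕜 : Type*} [RCLike 𝕜]
    (A : Set (Fin k → ℝ)) (B : Set (Fin m → ℝ)) (g : (Fin k → ℝ) → 𝕜) (h : (Fin m → ℝ) → 𝕜) :
    (∫ x in A, g x) * (∫ y in B, h y) =
      ∫ u in finAddSplit ℝ k m ⁻¹' (A ×ˢ B),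
        g (fun i => u (Fin.castAdd m i)) * h (fun j => u (Fin.natAdd k j)) := by
  rw [← integral_prod_mul, Measure.prod_restrict, ← Measure.volume_eq_prod,
    ← measurePreserving_finAddSplit.setIntegral_preimage_emb
      (finAddSplit ℝ k m).measurableEmbedding]
  simp only [finAddSplit_apply]

end Measure

section Shuffle

variable {k m : ℕ}

theorem perm_eq_of_strictMono_comp {α : Type*} [LinearOrder α] {n : ℕ} {u : Fin n → α}
    {σ τ : Equiv.Perm (Fin n)} (hσ : StrictMono (u ∘ σ)) (hτ : StrictMono (u ∘ τ)) : σ = τ := by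
  have hu : Injective u := (Equiv.injective_comp σ u).mp hσ.injective
  have h := Tuple.unique_monotone hσ.monotone hτ.monotone
  exact Equiv.ext fun i => hu (congrFun h i)

theorem strictMono_comp_sort {α : Type*} [LinearOrder α] {n : ℕ} {u : Fin n → α}
    (hu : Injective u) : StrictMono (u ∘ Tuple.sort u) :=
  (Tuple.monotone_sort u).strictMono_of_injective (hu.comp (Tuple.sort u).injective)

theorem isShuffle_iff_of_strictMono_comp {α : Type*} [LinearOrder α] {u : Fin (k + m) → α}
    {σ : Equiv.Perm (Fin (k + m))} (hσ : StrictMono (u ∘ σ)) :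
    IsShuffle k m σ ↔
      StrictMono (fun i => u (Fin.castAdd m i)) ∧ StrictMono (fun j => u (Fin.natAdd k j)) := by
  have key : ∀ {r : ℕ} (e : Fin r → Fin (k + m)),
      StrictMono (fun i => σ⁻¹ (e i)) ↔ StrictMono (fun i => u (e i)) := by
    intro r e
    refine ⟨fun h i j hij => ?_, fun h i j hij => ?_⟩
    · simpa using hσ (h hij)
    · simpa using (hσ.lt_iff_lt (a := σ⁻¹ (e i)) (b := σ⁻¹ (e j))).1 (by simpa using h hij)
  exact and_congr (key _) (key _)

end Shuffle

section OrderedTuples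

/-- `sigTerm X a b w` is by definition an integral over `orderedTuples (Set.Ioo a b) k`. -/
def orderedTuples (s : Set ℝ) (n : ℕ) : Set (Fin n → ℝ) :=
  {t | StrictMono t ∧ ∀ i, t i ∈ s}

variable {s : Set ℝ} {k m : ℕ}

theorem measurableSet_orderedTuples (hs : MeasurableSet s) (n : ℕ) :
    MeasurableSet (orderedTuples s n) := by
  refine measurableSet_setOf_strictMono.inter ?_
  show MeasurableSet {t : Fin n → ℝ | ∀ i, t i ∈ s}
  simp only [ofPred_forall]
  exact .iInter fun i => measurable_pi_apply i hs

theorem integrableOn_prod_apply {ι 𝕜 : Type*} [Fintype ι] [RCLike 𝕜] {f : ι → ℝ → 𝕜}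
    (hf : ∀ i, IntegrableOn (f i) s) :
    IntegrableOn (fun u : ι → ℝ => ∏ i, f i (u i)) (univ.pi fun _ => s) := by
  rw [IntegrableOn, volume_pi, Measure.restrict_pi_pi]
  exact Integrable.fintype_prod hf

theorem pairwise_disjoint_preimage_comp_orderedTuples (s : Set ℝ) (n : ℕ) :
    Pairwise (Disjoint on fun σ : Equiv.Perm (Fin n) => (· ∘ σ) ⁻¹' orderedTuples s n) :=
  fun _ _ hne => disjoint_left.2 fun _ hσ hτ => hne (perm_eq_of_strictMono_comp hσ.1 hτ.1)

theorem finAddSplit_preimage_orderedTuples_ae_eq [DecidablePred (IsShuffle k m)] (s : Set ℝ) :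
    finAddSplit ℝ k m ⁻¹' (orderedTuples s k ×ˢ orderedTuples s m) =ᵐ[volume]
      ⋃ σ ∈ Finset.univ.filter (IsShuffle k m), (· ∘ σ) ⁻¹' orderedTuples s (k + m) := by
  refine Filter.eventuallyEq_set.2 ?_
  filter_upwards [ae_injective (volume : Measure (Fin (k + m) → ℝ))] with u hu
  simp only [mem_preimage, finAddSplit_apply, mem_prod, orderedTuples, mem_ofPred_eq, mem_iUnion,
    Finset.mem_filter, Finset.mem_univ, true_and, exists_prop, comp_apply]
  constructor
  · rintro ⟨⟨hI, hsI⟩, hJ, hsJ⟩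
    have hsort := strictMono_comp_sort hu
    exact ⟨Tuple.sort u, (isShuffle_iff_of_strictMono_comp hsort).2 ⟨hI, hJ⟩, hsort,
      fun i => (Fin.forall_fin_add (fun j => u j ∈ s)).2 ⟨hsI, hsJ⟩ _⟩
  · rintro ⟨σ, hσ, hmono, hs⟩
    obtain ⟨hI, hJ⟩ := (isShuffle_iff_of_strictMono_comp hmono).1 hσ
    have hsu : ∀ i, u i ∈ s := fun i => by simpa using hs (σ⁻¹ i)
    exact ⟨⟨hI, fun i => hsu _⟩, hJ, fun j => hsu _⟩

theorem setIntegral_orderedTuples_mul_eq_sum_shuffle {α 𝕜 : Type*} [RCLike 𝕜]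
    [DecidablePred (IsShuffle k m)] (hs : MeasurableSet s) (f : α → ℝ → 𝕜)
    (hf : ∀ c, IntegrableOn (f c) s) (I : Fin k → α) (J : Fin m → α) :
    (∫ t in orderedTuples s k, ∏ i, f (I i) (t i)) *
        (∫ t in orderedTuples s m, ∏ j, f (J j) (t j)) =
      ∑ σ : Equiv.Perm (Fin (k + m)),
        if IsShuffle k m σ then
          ∫ t in orderedTuples s (k + m), ∏ i, f (Fin.append I J (σ i)) (t i)
        else 0 := by
  set F : (Fin (k + m) → ℝ) → 𝕜 := fun u => ∏ i, f (Fin.append I J i) (u i)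
  have hsplit : ∀ u : Fin (k + m) → ℝ, F u =
      (∏ i, f (I i) (u (Fin.castAdd m i))) * ∏ j, f (J j) (u (Fin.natAdd k j)) := by
    intro u
    simp [F, Fin.prod_univ_add]
  have hperm : ∀ σ : Equiv.Perm (Fin (k + m)),
      ∫ t in orderedTuples s (k + m), ∏ i, f (Fin.append I J (σ i)) (t i) =
        ∫ u in (· ∘ σ) ⁻¹' orderedTuples s (k + m), F u := by
    intro σ
    rw [← setIntegral_comp_perm σ]
    exact setIntegral_congr_fun (measurableSet_orderedTuples hs _ |>.preimage <| by fun_prop)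
      fun u _ => Equiv.prod_comp σ fun i => f (Fin.append I J i) (u i)
  rw [setIntegral_mul_setIntegral_eq_setIntegral_finAddSplit, ← Finset.sum_filter]
  simp only [hperm, ← hsplit]
  rw [setIntegral_congr_set (finAddSplit_preimage_orderedTuples_ae_eq s), integral_biUnion_finset]
  · exact fun σ _ => measurableSet_orderedTuples hs _ |>.preimage <| by fun_prop
  · exact (pairwise_disjoint_preimage_comp_orderedTuples s _).set_pairwise _
  · exact fun σ _ => (integrableOn_prod_apply fun i => hf _).mono_set
      fun u hu i _ => by simpa using hu.2 (σ⁻¹ i)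

end OrderedTuples

open scoped Classical in
theorem sigTerm_shuffle_general {d : ℕ} (a b : ℝ)
    (X : ℝ → Fin d → ℝ) (hX : ContDiff ℝ 1 X)
    (k m : ℕ) (I : Fin k → Fin d) (J : Fin m → Fin d) :
    sigTerm X a b I * sigTerm X a b J =
      ∑ σ : Equiv.Perm (Fin (k + m)),
        if IsShuffle k m σ then
          sigTerm X a b (fun i => Fin.append I J (σ i))
        else 0 := by
  have hderiv : ∀ c, IntegrableOn (deriv fun s => X s c) (Ioo a b) := fun c =>
    ((contDiff_apply ℝ ℝ c |>.comp hX).continuous_deriv le_rfl).integrableOn_Icc.mono_set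
      Ioo_subset_Icc_self
  exact setIntegral_orderedTuples_mul_eq_sum_shuffle measurableSet_Ioo _ hderiv I J

open scoped Classical in
/-- Shuffle product identity (Ree): the product of the iterated integrals along
two words `I` and `J` is the sum, over all `(k,m)`-shuffles `σ`, of the iterated
integral along the shuffled concatenation `(r_{σ(1)},…,r_{σ(k+m)})` where
`r = I ++ J`. -/
theorem sigTerm_shuffle {d : ℕ} (a b : ℝ) (hab : a ≤ b)
    (X : ℝ → Fin d → ℝ) (hX : ContDiff ℝ 1 X)
    (k m : ℕ) (I : Fin k → Fin d) (J : Fin m → Fin d) :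
    sigTerm X a b I * sigTerm X a b J =
      ∑ σ : Equiv.Perm (Fin (k + m)),
        if IsShuffle k m σ then
          sigTerm X a b (fun i => Fin.append I J (σ i))
        else 0 :=
  sigTerm_shuffle_general a b X hX k m I J
end

section
/- Let X : [a,b] → ℝ^d be a continuously differentiable path. For any indices i, j ∈ {1,…,d}, the shuffle product identity in the case of the words (i,j) and (i) reads: S(X)^{i,j}_{a,b} · S(X)^i_{a,b} = 2·S(X)^{i,i,j}_{a,b} + S(X)^{i,j,i}_{a,b}. -/
/-!
Fubini on the simplex gives the recursion
`S^{w l}_{a,b} = ∫_a^b (X^l)'(u) S^w_{a,u} du`. Hence, with `x u = X^i_u - X^i_a`,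
`S^i_{a,u} = x u`, `S^{ii}_{a,u} = (x u)^2 / 2` and `S^{ij}_{a,u} = C u := ∫_a^u (X^j)' x`.
The identity is integration by parts for `x * C`: `(x C)' = x' C + (X^j)' x^2`, whose two
terms integrate to `S^{iji}` and `2 S^{iij}`, while `x a * C a = 0`.
-/

open MeasureTheory

open Set

theorem Fin.strictMono_snoc_iff {α : Type*} [Preorder α] {k : ℕ} (y : Fin k → α) (x : α) :
    StrictMono (Fin.snoc y x : Fin (k + 1) → α) ↔ StrictMono y ∧ ∀ i, y i < x := by
  simpa [Fin.insertNth_last'] using Fin.strictMono_insertNth_iff (Fin.last k) x y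

namespace Signature

def simplex (k : ℕ) (a b : ℝ) : Set (Fin k → ℝ) :=
  {t | StrictMono t ∧ ∀ i, t i ∈ Ioo a b}

lemma isOpen_simplex (k : ℕ) (a b : ℝ) : IsOpen (simplex k a b) := by
  have hmono : {t : Fin k → ℝ | StrictMono t} =
      ⋂ pq ∈ {pq : Fin k × Fin k | pq.1 < pq.2}, {t | t pq.1 < t pq.2} := by
    ext t
    simp [StrictMono]
  have hIoo :
      {t : Fin k → ℝ | ∀ i, t i ∈ Ioo a b} = ⋂ i, (fun t => t i) ⁻¹' Ioo a b := by
    ext t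
    simp
  rw [simplex, ofPred_and, hmono, hIoo]
  refine IsOpen.inter ?_ ?_
  · refine (toFinite _).isOpen_biInter fun pq _ => ?_
    exact isOpen_lt (continuous_apply pq.1) (continuous_apply pq.2)
  · exact isOpen_iInter_of_finite fun i => isOpen_Ioo.preimage (continuous_apply i)

lemma snoc_mem_simplex_iff {k : ℕ} {a b x : ℝ} {y : Fin k → ℝ} :
    (Fin.snoc y x : Fin (k + 1) → ℝ) ∈ simplex (k + 1) a b ↔
      x ∈ Ioo a b ∧ y ∈ simplex k a x := by
  simp only [simplex, mem_ofPred_eq, Fin.strictMono_snoc_iff, Fin.forall_fin_succ',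
    Fin.snoc_castSucc, Fin.snoc_last, mem_Ioo]
  constructor
  · rintro ⟨⟨hy, hyx⟩, hyb, hax, hxb⟩
    exact ⟨⟨hax, hxb⟩, hy, fun i => ⟨(hyb i).1, hyx i⟩⟩
  · rintro ⟨⟨hax, hxb⟩, hy, hyx⟩
    exact ⟨⟨hy, fun i => (hyx i).2⟩, fun i => ⟨(hyx i).1, (hyx i).2.trans hxb⟩,
      hax, hxb⟩

lemma simplex_subset_pi_Icc (k : ℕ) (a b : ℝ) :
    simplex k a b ⊆ univ.pi fun _ => Icc a b :=
  fun _ ht i _ => Ioo_subset_Icc_self (ht.2 i)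

theorem setIntegral_simplex_succ {k : ℕ} {a b : ℝ} {g : (Fin (k + 1) → ℝ) → ℝ}
    (hg : IntegrableOn g (simplex (k + 1) a b)) :
    ∫ t in simplex (k + 1) a b, g t =
      ∫ x in Ioo a b, ∫ y in simplex k a x, g (Fin.snoc y x) := by
  set e := (MeasurableEquiv.piFinSuccAbove (fun _ : Fin (k + 1) => ℝ) (Fin.last k)).symm
  have he : ∀ p, e p = Fin.snoc p.2 p.1 := fun p => Fin.insertNth_last' p.1 p.2
  have he_vol : MeasurePreserving e := (volume_preserving_piFinSuccAbove _ _).symm _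
  set S := e ⁻¹' simplex (k + 1) a b
  have hS : MeasurableSet S := (isOpen_simplex _ a b).measurableSet.preimage e.measurable
  have hslice : ∀ x y, S.indicator (fun p => g (e p)) (x, y) =
      (Ioo a b).indicator (fun x => (simplex k a x).indicator (fun y => g (Fin.snoc y x)) y) x := by
    intro x y
    by_cases hx : x ∈ Ioo a b <;> by_cases hy : y ∈ simplex k a x <;>
      simp [S, indicator, he, snoc_mem_simplex_iff, hx, hy]
  rw [← he_vol.setIntegral_preimage_emb e.measurableEmbedding, ← integral_indicator hS,
    Measure.volume_eq_prod, integral_prod (S.indicator fun p => g (e p))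
      ((integrable_indicator_iff hS).2
        ((he_vol.integrableOn_comp_preimage e.measurableEmbedding).2 hg)),
    ← integral_indicator measurableSet_Ioo]
  refine integral_congr_ae (Filter.Eventually.of_forall fun x => ?_)
  simp only [hslice]
  by_cases hx : x ∈ Ioo a b
  · simp only [indicator_of_mem hx, integral_indicator (isOpen_simplex k a x).measurableSet]
  · simp only [indicator_of_notMem hx, integral_zero]

end Signature

open Signature

section

variable {d : ℕ} {X : ℝ → Fin d → ℝ}

lemma sigTerm_eq_setIntegral_simplex (a b : ℝ) {k : ℕ} (w : Fin k → Fin d) :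
    sigTerm X a b w = ∫ t in simplex k a b, ∏ i, deriv (fun s => X s (w i)) (t i) :=
  rfl

lemma sigTerm_nil (a b : ℝ) (w : Fin 0 → Fin d) : sigTerm X a b w = 1 := by
  have : simplex 0 a b = univ := eq_univ_of_forall fun t => ⟨fun i => i.elim0, fun i => i.elim0⟩
  simp [sigTerm_eq_setIntegral_simplex, this, measureReal_def, volume_pi]

theorem sigTerm_snoc (hX : ∀ m, Continuous (deriv fun s => X s m)) (a b : ℝ) {k : ℕ}
    (w : Fin k → Fin d) (l : Fin d) :
    sigTerm X a b (Fin.snoc w l) =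
      ∫ u in Ioo a b, deriv (fun s => X s l) u * sigTerm X a u w := by
  set g : (Fin (k + 1) → ℝ) → ℝ :=
    fun t => ∏ i, deriv (fun s => X s ((Fin.snoc w l : Fin (k + 1) → Fin d) i)) (t i)
  have hg : Continuous g :=
    continuous_finsetProd _ fun i _ => (hX _).comp (continuous_apply i)
  rw [sigTerm_eq_setIntegral_simplex, setIntegral_simplex_succ
    (hg.continuousOn.integrableOn_compact (isCompact_univ_pi fun _ => isCompact_Icc)
      |>.mono_set (simplex_subset_pi_Icc _ a b))]
  refine setIntegral_congr_fun measurableSet_Ioo fun u _ => ?_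
  simp only [g, sigTerm_eq_setIntegral_simplex, ← integral_const_mul, Fin.prod_univ_castSucc,
    Fin.snoc_castSucc, Fin.snoc_last, mul_comm]

theorem sigTerm_snoc_eq_of_eqOn (hX : ∀ m, Continuous (deriv fun s => X s m)) {a b : ℝ}
    (hab : a ≤ b) {k : ℕ} {w : Fin k → Fin d} (l : Fin d) {f : ℝ → ℝ}
    (hf : EqOn (fun u => sigTerm X a u w) f (Icc a b)) :
    sigTerm X a b (Fin.snoc w l) = ∫ u in a..b, deriv (fun s => X s l) u * f u := by
  rw [sigTerm_snoc hX, intervalIntegral.integral_of_le hab, ← integral_Ioc_eq_integral_Ioo]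
  exact setIntegral_congr_fun measurableSet_Ioc fun u hu =>
    congrArg _ (hf (Ioc_subset_Icc_self hu))

lemma ContDiff.continuous_deriv_apply (hX : ContDiff ℝ 1 X) (m : Fin d) :
    Continuous (deriv fun s => X s m) :=
  (contDiff_pi.mp hX m).continuous_deriv le_rfl

lemma ContDiff.hasDerivAt_apply (hX : ContDiff ℝ 1 X) (m : Fin d) (u : ℝ) :
    HasDerivAt (fun s => X s m) (deriv (fun s => X s m) u) u :=
  ((contDiff_pi.mp hX m).differentiable one_ne_zero u).hasDerivAt

theorem sigTerm_single (hX : ContDiff ℝ 1 X) {a b : ℝ} (hab : a ≤ b) (i : Fin d) :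
    sigTerm X a b ![i] = X b i - X a i := by
  have h := sigTerm_snoc_eq_of_eqOn (w := ![]) hX.continuous_deriv_apply hab i
    (f := fun _ => 1) fun u _ => sigTerm_nil a u _
  simp only [Matrix.Fin.snoc_vecEmpty, mul_one] at h
  rw [h, intervalIntegral.integral_eq_sub_of_hasDerivAt (fun u _ => hX.hasDerivAt_apply i u)
    ((hX.continuous_deriv_apply i).intervalIntegrable a b)]

theorem sigTerm_pair_self (hX : ContDiff ℝ 1 X) {a b : ℝ} (hab : a ≤ b) (i : Fin d) :
    sigTerm X a b ![i, i] = (X b i - X a i) ^ 2 / 2 := by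
  have h := sigTerm_snoc_eq_of_eqOn hX.continuous_deriv_apply hab i
    (f := fun u => X u i - X a i) fun u hu => sigTerm_single hX hu.1 i
  have hsq : ∀ u, HasDerivAt (fun u => (X u i - X a i) ^ 2 / 2)
      (deriv (fun s => X s i) u * (X u i - X a i)) u := fun u =>
    ((((hX.hasDerivAt_apply i u).sub_const (X a i)).fun_pow 2).div_const 2).congr_deriv
      (by push_cast; ring)
  simp only [Matrix.Fin.snoc_vecCons, Matrix.Fin.snoc_vecEmpty] at h
  rw [h, intervalIntegral.integral_eq_sub_of_hasDerivAt (fun u _ => hsq u)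
    (((hX.continuous_deriv_apply i).mul ((contDiff_pi.mp hX i).continuous.sub
      continuous_const)).intervalIntegrable a b)]
  simp

end

theorem integral_shuffle_pair_single {a b : ℝ} {x x' y' : ℝ → ℝ}
    (hx : ∀ u, HasDerivAt x (x' u) u) (hx' : Continuous x') (hy' : Continuous y')
    (hxa : x a = 0) :
    (∫ u in a..b, y' u * x u) * x b =
      2 * (∫ u in a..b, y' u * (x u ^ 2 / 2)) +
        ∫ u in a..b, x' u * ∫ v in a..u, y' v * x v := by
  set C : ℝ → ℝ := fun u => ∫ v in a..u, y' v * x v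
  have hx_cont : Continuous x := continuous_iff_continuousAt.2 fun u => (hx u).continuousAt
  have hC : ∀ u, HasDerivAt C (y' u * x u) u := fun u =>
    ((hy'.mul hx_cont).integral_hasStrictDerivAt a u).hasDerivAt
  have hC_cont : Continuous C := continuous_iff_continuousAt.2 fun u => (hC u).continuousAt
  have hI₁ : IntervalIntegrable (fun u => x' u * C u) volume a b :=
    (hx'.mul hC_cont).intervalIntegrable a b
  have hI₂ : IntervalIntegrable (fun u => x u * (y' u * x u)) volume a b :=
    (hx_cont.mul (hy'.mul hx_cont)).intervalIntegrable a b
  have hparts := intervalIntegral.integral_deriv_mul_eq_sub (fun u _ => hx u) (fun u _ => hC u)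
    (hx'.intervalIntegrable a b) ((hy'.mul hx_cont).intervalIntegrable a b)
  rw [intervalIntegral.integral_add hI₁ hI₂, hxa, zero_mul, sub_zero] at hparts
  have hsq : ∫ u in a..b, x u * (y' u * x u) = 2 * ∫ u in a..b, y' u * (x u ^ 2 / 2) := by
    rw [← intervalIntegral.integral_const_mul]
    exact intervalIntegral.integral_congr fun u _ => by ring
  linarith

/-- The shuffle product identity for the words `(i,j)` and `(i)`:
`S^{i,j}·S^i = 2·S^{i,i,j} + S^{i,j,i}`. -/
theorem sigTerm_shuffle_ij_i {d : ℕ} (a b : ℝ) (hab : a ≤ b)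
    (X : ℝ → Fin d → ℝ) (hX : ContDiff ℝ 1 X) (i j : Fin d) :
    sigTerm X a b ![i, j] * sigTerm X a b ![i]
        = 2 * sigTerm X a b ![i, i, j] + sigTerm X a b ![i, j, i] := by
  have hX' := hX.continuous_deriv_apply
  set x : ℝ → ℝ := fun u => X u i - X a i
  set C : ℝ → ℝ := fun u => ∫ v in a..u, deriv (fun s => X s j) v * x v
  have hS_i : EqOn (fun u => sigTerm X a u ![i]) x (Icc a b) := fun u hu =>
    sigTerm_single hX hu.1 i
  have hS_ij : EqOn (fun u => sigTerm X a u ![i, j]) C (Icc a b) := fun u hu => by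
    simpa using sigTerm_snoc_eq_of_eqOn hX' hu.1 j (hS_i.mono (Icc_subset_Icc_right hu.2))
  have hS_iij :
      sigTerm X a b ![i, i, j] = ∫ u in a..b, deriv (fun s => X s j) u * (x u ^ 2 / 2) := by
    simpa using sigTerm_snoc_eq_of_eqOn hX' hab j (f := fun u => x u ^ 2 / 2)
      fun u hu => sigTerm_pair_self hX hu.1 i
  have hS_iji : sigTerm X a b ![i, j, i] = ∫ u in a..b, deriv (fun s => X s i) u * C u := by
    simpa using sigTerm_snoc_eq_of_eqOn hX' hab i hS_ij
  have hb : b ∈ Icc a b := right_mem_Icc.2 hab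
  rw [show sigTerm X a b ![i, j] = C b from hS_ij hb, show sigTerm X a b ![i] = x b from hS_i hb,
    hS_iij, hS_iji]
  exact integral_shuffle_pair_single (fun u => (hX.hasDerivAt_apply i u).sub_const _) (hX' i)
    (hX' j) (sub_self _)
end

section
/- (Lévy area of the lead-lag path equals half the quadratic variation) Let N ≥ 1 and let x₀, x₁, …, x_N ∈ ℝ. Define the lead-lag path Z : [0, 2N] → ℝ² as the piecewise linear path through the vertices Z_{2i} = (x_i, x_i) for 0 ≤ i ≤ N and Z_{2i+1} = (x_{i+1}, x_i) for 0 ≤ i ≤ N−1 (linear on each interval [m, m+1], m = 0,…,2N−1; the first coordinate is the lead, the second the lag). Then the first-level iterated integrals satisfy S(Z)^1_{0,2N} = S(Z)^2_{0,2N} = x_N − x₀, and the second-level iterated integrals satisfy S(Z)^{1,2}_{0,2N} − S(Z)^{2,1}_{0,2N} = Σ_{i=0}^{N−1} (x_{i+1} − x_i)², i.e. twice the Lévy area of the lead-lag path equals the quadratic variation QV(x) = Σ_{i=0}^{N−1} (x_{i+1} − x_i)². -/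
/-!
Each coordinate of the lead-lag path is piecewise linear with nodes at the integers, so its
derivative is a.e. the step function of its increments `Δₖ`. Along such a path the first-level
integral telescopes, and Fubini on the simplex gives
`S^{ij} = ∑ₖ Δₖʲ (Xₖⁱ - X₀ⁱ + Δₖⁱ / 2)`, so the diagonal terms `Δₖⁱ Δₖʲ / 2` cancel in
`S^{ij} - S^{ji}`. The lead moves only on even steps and the lag only on odd steps, and the
two steps `2i, 2i + 1` together contribute `(x_{i+1} - x_i)²`.
-/

open MeasureTheory

/-- The lead-lag path of a sequence `x₀, x₁, …`: the piecewise linear path in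
`ℝ²` through the vertices `Z_{2i} = (x_i, x_i)` and `Z_{2i+1} = (x_{i+1}, x_i)`,
linear on each interval `[m, m+1]` (first coordinate: lead, second: lag). -/
noncomputable def leadLagPath (x : ℕ → ℝ) : ℝ → Fin 2 → ℝ := fun t =>
  ![x ((⌊t⌋₊ + 1) / 2), x (⌊t⌋₊ / 2)] +
    (t - (⌊t⌋₊ : ℝ)) •
      (![x ((⌊t⌋₊ + 2) / 2), x ((⌊t⌋₊ + 1) / 2)] - ![x ((⌊t⌋₊ + 1) / 2), x (⌊t⌋₊ / 2)])

open Set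

def simplexIoo (a b : ℝ) : Set (ℝ × ℝ) := {p | a < p.1 ∧ p.1 < p.2 ∧ p.2 < b}

theorem measurableSet_simplexIoo (a b : ℝ) : MeasurableSet (simplexIoo a b) :=
  (measurableSet_lt measurable_const measurable_fst).inter
    ((measurableSet_lt measurable_fst measurable_snd).inter
      (measurableSet_lt measurable_snd measurable_const))

theorem setIntegral_simplexIoo_mul {f g : ℝ → ℝ} {a b : ℝ} (hf : IntegrableOn f (Ioo a b))
    (hg : IntegrableOn g (Ioo a b)) :
    ∫ p in simplexIoo a b, f p.1 * g p.2 = ∫ t in Ioo a b, g t * ∫ s in Ioo a t, f s := by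
  set F := (Ioo a b).indicator f
  set G := (Ioo a b).indicator g
  have hFG : ∫ p in simplexIoo a b, f p.1 * g p.2 = ∫ p in simplexIoo a b, F p.1 * G p.2 :=
    setIntegral_congr_fun (measurableSet_simplexIoo a b) fun p hp => by
      simp only [F, G, indicator_of_mem (show p.1 ∈ Ioo a b from ⟨hp.1, hp.2.1.trans hp.2.2⟩),
        indicator_of_mem (show p.2 ∈ Ioo a b from ⟨hp.1.trans hp.2.1, hp.2.2⟩)]
  have hint : Integrable (fun p : ℝ × ℝ => F p.1 * G p.2) (volume.prod volume) :=
    ((integrable_indicator_iff measurableSet_Ioo).2 hf).mul_prod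
      ((integrable_indicator_iff measurableSet_Ioo).2 hg)
  have hslice : ∀ t, ∫ s, (simplexIoo a b).indicator (fun p => F p.1 * G p.2) (s, t)
      = (Ioo a b).indicator (fun t => g t * ∫ s in Ioo a t, f s) t := by
    intro t
    by_cases ht : t ∈ Ioo a b
    · have hsection : ∀ s, (simplexIoo a b).indicator (fun p => F p.1 * G p.2) (s, t)
          = (Ioo a t).indicator (fun s => f s * g t) s := by
        intro s
        by_cases hs : s ∈ Ioo a t
        · rw [indicator_of_mem hs,
            indicator_of_mem (show (s, t) ∈ simplexIoo a b from ⟨hs.1, hs.2, ht.2⟩)]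
          simp only [F, G, indicator_of_mem ht,
            indicator_of_mem (show s ∈ Ioo a b from ⟨hs.1, hs.2.trans ht.2⟩)]
        · rw [indicator_of_notMem hs, indicator_of_notMem fun h => hs ⟨h.1, h.2.1⟩]
      simp only [hsection]
      rw [indicator_of_mem ht, integral_indicator measurableSet_Ioo, integral_mul_const, mul_comm]
    · have hsection : ∀ s, (simplexIoo a b).indicator (fun p => F p.1 * G p.2) (s, t) = 0 :=
        fun s => indicator_of_notMem (fun h => ht ⟨h.1.trans h.2.1, h.2.2⟩) _
      simp only [hsection, integral_zero, indicator_of_notMem ht]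
  rw [hFG, ← integral_indicator (measurableSet_simplexIoo a b), Measure.volume_eq_prod,
    integral_prod_symm _ (hint.indicator (measurableSet_simplexIoo a b))]
  simp only [hslice]
  rw [integral_indicator measurableSet_Ioo]

theorem sigTerm_fin_one {d : ℕ} (X : ℝ → Fin d → ℝ) (a b : ℝ) (w : Fin 1 → Fin d) :
    sigTerm X a b w = ∫ t in Ioo a b, deriv (fun s => X s (w 0)) t := by
  have h := ((volume_preserving_funUnique (Fin 1) ℝ).symm _).setIntegral_preimage_emb
    (MeasurableEquiv.measurableEmbedding _) (fun t => ∏ i, deriv (fun s => X s (w i)) (t i))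
    {t : Fin 1 → ℝ | StrictMono t ∧ ∀ i, t i ∈ Ioo a b}
  refine h.symm.trans ?_
  have hset : (MeasurableEquiv.funUnique (Fin 1) ℝ).symm ⁻¹'
      {t : Fin 1 → ℝ | StrictMono t ∧ ∀ i, t i ∈ Ioo a b} = Ioo a b := by
    ext r
    simp [MeasurableEquiv.funUnique, Subsingleton.strictMono]
  rw [hset]
  simp [MeasurableEquiv.funUnique]

theorem sigTerm_fin_two {d : ℕ} (X : ℝ → Fin d → ℝ) (a b : ℝ) (w : Fin 2 → Fin d) :
    sigTerm X a b w = ∫ p in simplexIoo a b,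
      deriv (fun s => X s (w 0)) p.1 * deriv (fun s => X s (w 1)) p.2 := by
  rw [sigTerm, ← ((volume_preserving_finTwoArrow ℝ).symm _).setIntegral_preimage_emb
    (MeasurableEquiv.measurableEmbedding _)]
  have hset : (MeasurableEquiv.finTwoArrow (α := ℝ)).symm ⁻¹'
      {t : Fin 2 → ℝ | StrictMono t ∧ ∀ i, t i ∈ Ioo a b} = simplexIoo a b := by
    ext p
    simp [MeasurableEquiv.finTwoArrow, Fin.strictMono_iff_lt_succ, simplexIoo]
    exact ⟨fun ⟨h12, ⟨h1, _⟩, _, h2⟩ => ⟨h1, h12, h2⟩,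
      fun ⟨h1, h12, h2⟩ => ⟨h12, ⟨h1, h12.trans h2⟩, h1.trans h12, h2⟩⟩
  rw [hset]
  simp [MeasurableEquiv.finTwoArrow, Fin.prod_univ_two]

noncomputable def piecewiseLinear (v : ℕ → ℝ) (t : ℝ) : ℝ :=
  v ⌊t⌋₊ + (t - ⌊t⌋₊) * (v (⌊t⌋₊ + 1) - v ⌊t⌋₊)

namespace piecewiseLinear

open intervalIntegral

variable (v : ℕ → ℝ)

theorem eqOn_Ico (k : ℕ) :
    EqOn (piecewiseLinear v) (fun t => v k + (t - k) * (v (k + 1) - v k)) (Ico k (k + 1)) := by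
  intro t ht
  rw [piecewiseLinear, (Nat.floor_eq_iff ((Nat.cast_nonneg k).trans ht.1)).2 ht]

theorem apply_natCast (n : ℕ) : piecewiseLinear v n = v n := by
  simp [piecewiseLinear]

theorem hasDerivAt {k : ℕ} {t : ℝ} (ht : t ∈ Ioo (k : ℝ) (k + 1)) :
    HasDerivAt (piecewiseLinear v) (v (k + 1) - v k) t := by
  have hlin : HasDerivAt (fun t : ℝ => v k + (t - k) * (v (k + 1) - v k)) (v (k + 1) - v k) t := by
    simpa using (((hasDerivAt_id t).sub_const (k : ℝ)).mul_const (v (k + 1) - v k)).const_add (v k)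
  exact hlin.congr_of_eventuallyEq <| Filter.mem_of_superset (Ioo_mem_nhds ht.1 ht.2)
    fun s hs => eqOn_Ico v k (Ioo_subset_Ico_self hs)

theorem eqOn_deriv (k : ℕ) :
    EqOn (deriv (piecewiseLinear v)) (fun _ => v (k + 1) - v k) (Ioo k (k + 1)) :=
  fun _ ht => (hasDerivAt v ht).deriv

theorem intervalIntegrable_deriv (k : ℕ) :
    IntervalIntegrable (deriv (piecewiseLinear v)) volume k (k + 1) :=
  intervalIntegrable_const.congr_uIoo
    (uIoo_of_le (by linarith : (k : ℝ) ≤ k + 1) ▸ (eqOn_deriv v k).symm)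

theorem integral_deriv_of_mem_Icc (k : ℕ) {t : ℝ} (ht : t ∈ Icc (k : ℝ) (k + 1)) :
    ∫ s in (k : ℝ)..t, deriv (piecewiseLinear v) s = (t - k) * (v (k + 1) - v k) := by
  rw [integral_congr_Ioo_of_le ht.1 ((eqOn_deriv v k).mono (Ioo_subset_Ioo_right ht.2)),
    intervalIntegral.integral_const, smul_eq_mul]

theorem intervalIntegrable_deriv_natCast (n : ℕ) :
    IntervalIntegrable (deriv (piecewiseLinear v)) volume 0 n := by
  simpa using IntervalIntegrable.trans_iterate (a := Nat.cast) (n := n)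
    fun k _ => by simpa using intervalIntegrable_deriv v k

theorem integral_deriv_natCast (n : ℕ) :
    ∫ s in (0 : ℝ)..n, deriv (piecewiseLinear v) s = v n - v 0 := by
  have hsum := sum_integral_adjacent_intervals (a := Nat.cast) (n := n)
    (μ := volume) (f := deriv (piecewiseLinear v))
    fun k _ => by simpa using intervalIntegrable_deriv v k
  simp only [Nat.cast_zero, Nat.cast_succ] at hsum
  rw [← hsum, ← Finset.sum_range_sub]
  refine Finset.sum_congr rfl fun k _ => ?_
  rw [integral_deriv_of_mem_Icc v k ⟨by linarith, le_rfl⟩]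
  ring

theorem integral_deriv {t : ℝ} (ht : 0 ≤ t) :
    ∫ s in (0 : ℝ)..t, deriv (piecewiseLinear v) s = piecewiseLinear v t - v 0 := by
  set n := ⌊t⌋₊
  have hn : t ∈ Ico (n : ℝ) (n + 1) := ⟨Nat.floor_le ht, Nat.lt_floor_add_one t⟩
  have htail : IntervalIntegrable (deriv (piecewiseLinear v)) volume n t :=
    (intervalIntegrable_deriv v n).mono_set (uIcc_subset_uIcc_left (mem_uIcc_of_le hn.1 hn.2.le))
  rw [← integral_add_adjacent_intervals (intervalIntegrable_deriv_natCast v n) htail,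
    integral_deriv_natCast, integral_deriv_of_mem_Icc v n ⟨hn.1, hn.2.le⟩, eqOn_Ico v n hn]
  ring

theorem integrableOn_deriv (L : ℕ) :
    IntegrableOn (deriv (piecewiseLinear v)) (Ioo 0 L) :=
  (intervalIntegrable_iff_integrableOn_Ioo_of_le (Nat.cast_nonneg L)).1
    (intervalIntegrable_deriv_natCast v L)

theorem setIntegral_deriv {t : ℝ} (ht : 0 ≤ t) :
    ∫ s in Ioo 0 t, deriv (piecewiseLinear v) s = piecewiseLinear v t - v 0 := by
  rw [← integral_Ioc_eq_integral_Ioo, ← integral_of_le ht, integral_deriv v ht]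

end piecewiseLinear

open intervalIntegral in
theorem piecewiseLinear.setIntegral_simplexIoo_deriv_mul_deriv (u v : ℕ → ℝ) (L : ℕ) :
    ∫ p in simplexIoo 0 L, deriv (piecewiseLinear u) p.1 * deriv (piecewiseLinear v) p.2
      = ∑ k ∈ Finset.range L, (v (k + 1) - v k) * (u k - u 0 + (u (k + 1) - u k) / 2) := by
  set F := fun t => deriv (piecewiseLinear v) t * ∫ s in Ioo 0 t, deriv (piecewiseLinear u) s
  set G := fun (k : ℕ) (t : ℝ) => (v (k + 1) - v k) * (u k - u 0 + (t - k) * (u (k + 1) - u k))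
  have hFG : ∀ k : ℕ, EqOn F (G k) (Ioo k (k + 1)) := fun k t ht => by
    simp only [F, G, eqOn_deriv v k ht, setIntegral_deriv u ((Nat.cast_nonneg k).trans ht.1.le),
      eqOn_Ico u k (Ioo_subset_Ico_self ht)]
    ring
  have hle : ∀ k : ℕ, (k : ℝ) ≤ k + 1 := fun k => by linarith
  have hF : ∀ k < L, IntervalIntegrable F volume (k : ℕ) ((k + 1 : ℕ) : ℝ) := fun k _ => by
    rw [Nat.cast_succ]
    exact (Continuous.intervalIntegrable (by fun_prop) _ _).congr_uIoo
      (uIoo_of_le (hle k) ▸ (hFG k).symm)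
  rw [setIntegral_simplexIoo_mul (integrableOn_deriv u L) (integrableOn_deriv v L),
    ← integral_Ioc_eq_integral_Ioo, ← integral_of_le (Nat.cast_nonneg L)]
  have hsum := sum_integral_adjacent_intervals hF
  rw [Nat.cast_zero] at hsum
  change ∫ t in (0 : ℝ)..L, F t = _
  rw [← hsum]
  refine Finset.sum_congr rfl fun k _ => ?_
  rw [Nat.cast_succ, integral_congr_Ioo_of_le (hle k) (hFG k)]
  simp only [G]
  rw [intervalIntegral.integral_const_mul, intervalIntegral.integral_add intervalIntegrable_const
      (Continuous.intervalIntegrable (by fun_prop) _ _), intervalIntegral.integral_const,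
    intervalIntegral.integral_mul_const, integral_comp_sub_right (fun t => t), integral_id]
  ring

section PiecewiseLinearPath

variable {d : ℕ} {X : ℝ → Fin d → ℝ} {v : ℕ → Fin d → ℝ}

theorem sigTerm_singleton_of_piecewiseLinear
    (hX : ∀ j, (fun t => X t j) = piecewiseLinear (fun m => v m j)) (L : ℕ) (i : Fin d) :
    sigTerm X 0 L ![i] = v L i - v 0 i := by
  rw [sigTerm_fin_one, Matrix.cons_val_zero, hX,
    piecewiseLinear.setIntegral_deriv _ (Nat.cast_nonneg L), piecewiseLinear.apply_natCast]

theorem sigTerm_pair_of_piecewiseLinear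
    (hX : ∀ j, (fun t => X t j) = piecewiseLinear (fun m => v m j)) (L : ℕ) (i j : Fin d) :
    sigTerm X 0 L ![i, j] = ∑ k ∈ Finset.range L,
      (v (k + 1) j - v k j) * (v k i - v 0 i + (v (k + 1) i - v k i) / 2) := by
  rw [sigTerm_fin_two, Matrix.cons_val_zero, Matrix.cons_val_one, Matrix.cons_val_zero, hX, hX,
    piecewiseLinear.setIntegral_simplexIoo_deriv_mul_deriv]

theorem sigTerm_pair_sub_sigTerm_pair_of_piecewiseLinear
    (hX : ∀ j, (fun t => X t j) = piecewiseLinear (fun m => v m j)) (L : ℕ) (i j : Fin d) :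
    sigTerm X 0 L ![i, j] - sigTerm X 0 L ![j, i] = ∑ k ∈ Finset.range L,
      ((v (k + 1) j - v k j) * (v k i - v 0 i) - (v (k + 1) i - v k i) * (v k j - v 0 j)) := by
  rw [sigTerm_pair_of_piecewiseLinear hX, sigTerm_pair_of_piecewiseLinear hX,
    ← Finset.sum_sub_distrib]
  exact Finset.sum_congr rfl fun k _ => by ring

end PiecewiseLinearPath

noncomputable def leadLagVertex (x : ℕ → ℝ) (m : ℕ) : Fin 2 → ℝ := ![x ((m + 1) / 2), x (m / 2)]

theorem leadLagPath_eq_piecewiseLinear (x : ℕ → ℝ) (j : Fin 2) :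
    (fun t => leadLagPath x t j) = piecewiseLinear (fun m => leadLagVertex x m j) :=
  rfl

theorem sum_leadLagVertex_area (x : ℕ → ℝ) (N : ℕ) :
    ∑ k ∈ Finset.range (2 * N),
      ((leadLagVertex x (k + 1) 1 - leadLagVertex x k 1) *
          (leadLagVertex x k 0 - leadLagVertex x 0 0) -
        (leadLagVertex x (k + 1) 0 - leadLagVertex x k 0) *
          (leadLagVertex x k 1 - leadLagVertex x 0 1))
      = ∑ i ∈ Finset.range N, (x (i + 1) - x i) ^ 2 := by
  induction N with
  | zero => simp
  | succ n ih =>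
    rw [Nat.mul_succ, Finset.sum_range_succ, Finset.sum_range_succ, ih, Finset.sum_range_succ]
    have h0 : 2 * n / 2 = n := by omega
    have h1 : (2 * n + 1) / 2 = n := by omega
    have h2 : (2 * n + 1 + 1) / 2 = n + 1 := by omega
    have h3 : (2 * n + 1 + 1 + 1) / 2 = n + 1 := by omega
    simp only [leadLagVertex, Matrix.cons_val_zero, Matrix.cons_val_one, Matrix.cons_val_fin_one,
      h0, h1, h2, h3]
    ring

theorem leadLag_levyArea_eq_quadraticVariation_general (N : ℕ) (x : ℕ → ℝ) :
    sigTerm (leadLagPath x) 0 (2 * N) ![0] = x N - x 0 ∧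
    sigTerm (leadLagPath x) 0 (2 * N) ![1] = x N - x 0 ∧
    sigTerm (leadLagPath x) 0 (2 * N) ![0, 1] - sigTerm (leadLagPath x) 0 (2 * N) ![1, 0]
      = ∑ i ∈ Finset.range N, (x (i + 1) - x i) ^ 2 := by
  have hZ := leadLagPath_eq_piecewiseLinear x
  have hcast : (2 * N : ℝ) = ((2 * N : ℕ) : ℝ) := by push_cast; rfl
  have hmid : (2 * N + 1) / 2 = N := by omega
  rw [hcast, sigTerm_singleton_of_piecewiseLinear hZ, sigTerm_singleton_of_piecewiseLinear hZ,
    sigTerm_pair_sub_sigTerm_pair_of_piecewiseLinear hZ, sum_leadLagVertex_area]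
  simp [leadLagVertex, hmid]

/-- The Lévy area of the lead-lag path equals half the quadratic variation: the
first-level iterated integrals of the lead-lag path of `x₀,…,x_N` are both the
increment `x_N − x₀`, and `S^{1,2} − S^{2,1} = Σ_{i=0}^{N−1} (x_{i+1} − x_i)²`,
i.e. twice the Lévy area equals the quadratic variation. -/
theorem leadLag_levyArea_eq_quadraticVariation (N : ℕ) (hN : 1 ≤ N) (x : ℕ → ℝ) :
    sigTerm (leadLagPath x) 0 (2 * N) ![0] = x N - x 0 ∧
    sigTerm (leadLagPath x) 0 (2 * N) ![1] = x N - x 0 ∧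
    sigTerm (leadLagPath x) 0 (2 * N) ![0, 1] - sigTerm (leadLagPath x) 0 (2 * N) ![1, 0]
      = ∑ i ∈ Finset.range N, (x (i + 1) - x i) ^ 2 :=
  leadLag_levyArea_eq_quadraticVariation_general N x
end
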